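/- (Sphere-packing type bound for b-symbol distance) Let 1 ≤ d ≤ n and t = ⌊(d-1)/2⌋. Then A_b(n,d,q) ≤ q^{bn} / (Σ_{i=0}^{t} C(n,i)(q^b-1)^i). -/

import Mathlib

open Finset

/-- Cyclic coordinate access: `cget z k` is the coordinate `z_k`, indices taken mod `n`. -/
def cget {Fq : Type*} [Zero Fq] {n : ℕ} (y : Fin n → Fq) (k : ℕ) : Fq :=
  if h : n = 0 then 0 else y ⟨k % n, Nat.mod_lt k (Nat.pos_of_ne_zero h)⟩

/-- The `b`-symbol weight of a vector `y ∈ Fq^n`. -/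
def wtb {Fq : Type*} [Zero Fq] [DecidableEq Fq] {n : ℕ} (b : ℕ) (y : Fin n → Fq) : ℕ :=
  ((Finset.range n).filter fun i => ∃ j : Fin b, cget y (i + j) ≠ 0).card

/-- The `b`-symbol distance on `Fq^n`. -/
def db {Fq : Type*} [Field Fq] [DecidableEq Fq] {n : ℕ} (b : ℕ) (x y : Fin n → Fq) : ℕ :=
  wtb b (x - y)


/-- `Asize Fq n b d` : the largest size of a code in `Fq^n` with minimum `b`-symbol
distance at least `d`. -/
noncomputable def Asize (Fq : Type*) [Field Fq] [Fintype Fq] [DecidableEq Fq] (n b d : ℕ) : ℕ :=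
  sSup {M | ∃ C : Finset (Fin n → Fq),
    (∀ x ∈ C, ∀ y ∈ C, x ≠ y → d ≤ db b x y) ∧ C.card = M}

/-! Reading the `b` cyclically consecutive symbols at every position maps `F_q^n` to
`(F_q^b)^n` and turns the `b`-symbol distance into the Hamming distance; for `d ≥ 1` it is
injective on a code of minimum distance `d`. The Hamming balls of radius `t = ⌊(d-1)/2⌋` around
the images of the codewords are then pairwise disjoint, and each contains
`Σ_{i ≤ t} C(n,i)(q^b-1)^i` words of the `q^{bn}` available. -/

section HammingBall

variable {A : Type*} [Fintype A] [DecidableEq A] {n : ℕ}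

lemma filter_ne_set_eq_piFinset (x : Fin n → A) (s : Finset (Fin n)) :
    ({y | ({j | x j ≠ y j} : Finset (Fin n)) = s} : Finset (Fin n → A)) =
      Fintype.piFinset fun j => if j ∈ s then (univ : Finset A).erase (x j) else {x j} := by
  ext y
  simp only [mem_filter, mem_univ, true_and, Fintype.mem_piFinset, Finset.ext_iff]
  refine forall_congr' fun j => ?_
  split_ifs with hj <;> simp [hj, eq_comm]

lemma card_filter_ne_set_eq (x : Fin n → A) (s : Finset (Fin n)) :
    #{y : Fin n → A | ({j | x j ≠ y j} : Finset (Fin n)) = s} = (Fintype.card A - 1) ^ #s := by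
  rw [filter_ne_set_eq_piFinset, Fintype.card_piFinset]
  simp [apply_ite, Finset.prod_ite_mem]

lemma card_filter_hammingDist_eq (x : Fin n → A) (i : ℕ) :
    #{y : Fin n → A | hammingDist x y = i} = n.choose i * (Fintype.card A - 1) ^ i := by
  rw [card_eq_sum_card_fiberwise (f := fun y => ({j | x j ≠ y j} : Finset (Fin n)))
    (t := powersetCard i univ) (fun y hy => by simpa [hammingDist] using hy)]
  calc _ = ∑ s ∈ powersetCard i (univ : Finset (Fin n)), (Fintype.card A - 1) ^ i := by
        refine sum_congr rfl fun s hs => ?_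
        rw [mem_powersetCard] at hs
        rw [← hs.2, ← card_filter_ne_set_eq x s, filter_filter]
        congr 1
        refine filter_congr fun y _ => ?_
        constructor
        · exact And.right
        · rintro rfl; exact ⟨rfl, rfl⟩
    _ = n.choose i * (Fintype.card A - 1) ^ i := by simp

def hammingBall (x : Fin n → A) (t : ℕ) : Finset (Fin n → A) :=
  {y | hammingDist x y ≤ t}

lemma card_hammingBall (x : Fin n → A) (t : ℕ) :
    #(hammingBall x t) = ∑ i ∈ range (t + 1), n.choose i * (Fintype.card A - 1) ^ i := by
  rw [card_eq_sum_card_fiberwise (f := hammingDist x) (t := range (t + 1))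
    (fun y hy => by simpa [hammingBall, Nat.lt_succ_iff] using hy)]
  refine sum_congr rfl fun i hi => ?_
  rw [hammingBall, filter_filter, ← card_filter_hammingDist_eq x i]
  congr 1
  refine filter_congr fun y _ => ?_
  constructor
  · exact And.right
  · rintro rfl; exact ⟨Nat.lt_succ_iff.mp (mem_range.mp hi), rfl⟩

lemma disjoint_hammingBall {x y : Fin n → A} {t : ℕ} (h : 2 * t < hammingDist x y) :
    Disjoint (hammingBall x t) (hammingBall y t) := by
  refine disjoint_left.mpr fun z hx hy => ?_
  simp only [hammingBall, mem_filter, mem_univ, true_and] at hx hy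
  have := hammingDist_triangle x z y
  rw [hammingDist_comm z y] at this
  omega

theorem hamming_bound {C : Finset (Fin n → A)} {d : ℕ}
    (hC : ∀ x ∈ C, ∀ y ∈ C, x ≠ y → d ≤ hammingDist x y) :
    #C * ∑ i ∈ range ((d - 1) / 2 + 1), n.choose i * (Fintype.card A - 1) ^ i ≤
      Fintype.card A ^ n := by
  have hdisj : (C : Set (Fin n → A)).PairwiseDisjoint (hammingBall · ((d - 1) / 2)) :=
    fun x hx y hy hxy => disjoint_hammingBall <| by
      have := hC x hx y hy hxy
      have := hammingDist_pos.mpr hxy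
      omega
  calc #C * ∑ i ∈ range ((d - 1) / 2 + 1), n.choose i * (Fintype.card A - 1) ^ i
      = #(C.biUnion (hammingBall · ((d - 1) / 2))) := by
        simp [card_biUnion hdisj, card_hammingBall]
    _ ≤ Fintype.card A ^ n := (card_le_univ _).trans_eq (by simp)

end HammingBall

section SymbolRead

variable {F : Type*} {n : ℕ}

def symbolRead [Zero F] (b : ℕ) (x : Fin n → F) : Fin n → Fin b → F :=
  fun i j => cget x (i + j)

lemma cget_sub [AddGroup F] (x y : Fin n → F) (k : ℕ) :
    cget (x - y) k = cget x k - cget y k := by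
  unfold cget
  split_ifs <;> simp

lemma db_eq_hammingDist_symbolRead [Field F] [DecidableEq F] (b : ℕ) (x y : Fin n → F) :
    db b x y = hammingDist (symbolRead b x) (symbolRead b y) := by
  rw [db, wtb, hammingDist, ← Nat.Iio_eq_range, ← Fin.map_valEmbedding_univ, filter_map,
    card_map]
  congr 1
  refine filter_congr fun i _ => ?_
  simp [symbolRead, Function.ne_iff, cget_sub, sub_eq_zero]

theorem bSymbol_hamming_bound [Field F] [Fintype F] [DecidableEq F] {b d : ℕ} (hd : 1 ≤ d)
    {C : Finset (Fin n → F)} (hC : ∀ x ∈ C, ∀ y ∈ C, x ≠ y → d ≤ db b x y) :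
    #C * ∑ i ∈ range ((d - 1) / 2 + 1), n.choose i * (Fintype.card F ^ b - 1) ^ i ≤
      Fintype.card F ^ (b * n) := by
  have hinj : Set.InjOn (symbolRead b) (C : Set (Fin n → F)) := by
    intro x hx y hy hxy
    by_contra hne
    have := hC x hx y hy hne
    rw [db_eq_hammingDist_symbolRead, hxy, hammingDist_self] at this
    omega
  have hC' : ∀ u ∈ C.image (symbolRead b), ∀ v ∈ C.image (symbolRead b), u ≠ v →
      d ≤ hammingDist u v := by
    simp only [mem_image]
    rintro _ ⟨x, hx, rfl⟩ _ ⟨y, hy, rfl⟩ hne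
    rw [← db_eq_hammingDist_symbolRead]
    exact hC x hx y hy (ne_of_apply_ne _ hne)
  simpa [card_image_of_injOn hinj, Fintype.card_fun, pow_mul] using hamming_bound hC'

end SymbolRead

theorem sphere_packing_bound_general {Fq : Type*} [Field Fq] [Fintype Fq] [DecidableEq Fq]
    {n d b : ℕ} (hd : 1 ≤ d) :
    (Asize Fq n b d : ℝ) ≤
      (Fintype.card Fq : ℝ) ^ (b * n) /
        ∑ i ∈ Finset.range ((d - 1) / 2 + 1),
          (n.choose i : ℝ) * ((Fintype.card Fq : ℝ) ^ b - 1) ^ i := by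
  set q := Fintype.card Fq
  set V := ∑ i ∈ range ((d - 1) / 2 + 1), n.choose i * (q ^ b - 1) ^ i
  have hV : 0 < V := by simp [V, sum_range_succ']
  have hA : Asize Fq n b d ≤ q ^ (b * n) / V :=
    csSup_le ⟨0, ∅, by simp, rfl⟩ fun M ⟨C, hC, hM⟩ =>
      (Nat.le_div_iff_mul_le hV).mpr (hM ▸ bSymbol_hamming_bound hd hC)
  have hV_cast : (V : ℝ) = ∑ i ∈ range ((d - 1) / 2 + 1),
      (n.choose i : ℝ) * ((q : ℝ) ^ b - 1) ^ i := by
    have hqb : 1 ≤ q ^ b := Nat.one_le_pow _ _ Fintype.card_pos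
    simp [V, Nat.cast_sub hqb]
  calc (Asize Fq n b d : ℝ) ≤ ((q ^ (b * n) / V : ℕ) : ℝ) := by exact_mod_cast hA
    _ ≤ _ := by simpa [hV_cast] using Nat.cast_div_le (α := ℝ) (m := q ^ (b * n)) (n := V)

/-- Corollary 4.8 (sphere-packing type bound for the `b`-symbol distance): with
`t = ⌊(d-1)/2⌋`, `A_b(n,d,q) ≤ q^{bn} / Σ_{i=0}^{t} C(n,i)(q^b-1)^i`. -/
theorem sphere_packing_bound {Fq : Type*} [Field Fq] [Fintype Fq] [DecidableEq Fq]
    {n d b : ℕ} (hb1 : 1 ≤ b) (hbn : b ≤ n) (hd : 1 ≤ d) (hdn : d ≤ n) :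
    (Asize Fq n b d : ℝ) ≤
      (Fintype.card Fq : ℝ) ^ (b * n) /
        ∑ i ∈ Finset.range ((d - 1) / 2 + 1),
          (n.choose i : ℝ) * ((Fintype.card Fq : ℝ) ^ b - 1) ^ i :=
  sphere_packing_bound_general hd
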